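/- arXiv:2401.07091 — 2 statements merged into one kernel-verified Lean document; each statement's English description precedes it below -/
import Mathlib

section
/- Let D_1, …, D_{n−t} be the groups present after t merging steps of the single-linkage algorithm on (X, dist) (where 0 ≤ t ≤ n−2), and let D_a, D_b be the pair among them with minimum spacing. Let C* be any clustering of X into at least two groups with Min-Sp(C*) > spacing(D_a, D_b). Then every group D_i (i = 1, …, n−t) is contained in a single group of C*, and moreover D_a ∪ D_b is contained in a single group of C*. -/
open scoped Classical

namespace ClusterSpacing

variable {X : Type*}

/-- The spacing between two groups: the minimum (infimum) distance between a
point of `A` and a point of `B`. -/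
noncomputable def spacing (dist : X → X → ℝ) (A B : Set X) : ℝ :=
  sInf {d : ℝ | ∃ x ∈ A, ∃ y ∈ B, d = dist x y}

/-- The weight of an (unordered) edge between two groups. For symmetric `dist`
this coincides with `spacing`. -/
noncomputable def edgeWeight (dist : X → X → ℝ) : Sym2 (Set X) → ℝ :=
  Sym2.lift ⟨fun A B =>
    sInf ({d : ℝ | ∃ x ∈ A, ∃ y ∈ B, d = dist x y} ∪
          {d : ℝ | ∃ x ∈ B, ∃ y ∈ A, d = dist x y}),
    fun A B => by beta_reduce; rw [Set.union_comm]⟩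

/-- A clustering of `X`: a partition of `X` into nonempty groups. -/
def IsClustering (𝒞 : Set (Set X)) : Prop :=
  (∀ A ∈ 𝒞, A.Nonempty) ∧ ⋃₀ 𝒞 = Set.univ ∧
    ∀ A ∈ 𝒞, ∀ B ∈ 𝒞, A ≠ B → Disjoint A B

/-- The minimum spacing of a clustering: the minimum spacing over pairs of
distinct groups. -/
noncomputable def MinSp (dist : X → X → ℝ) (𝒞 : Set (Set X)) : ℝ :=
  sInf {d : ℝ | ∃ A ∈ 𝒞, ∃ B ∈ 𝒞, A ≠ B ∧ d = spacing dist A B}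

/-- Total weight of (the edges of) a graph on the groups of a clustering. -/
noncomputable def treeCost (dist : X → X → ℝ) (𝒞 : Set (Set X))
    (T : SimpleGraph {A : Set X // A ∈ 𝒞}) : ℝ :=
  ∑ᶠ e ∈ T.edgeSet, edgeWeight dist (Sym2.map Subtype.val e)

/-- The MST spacing of a clustering: the minimum, over all spanning trees of the
complete graph on the groups, of the total edge weight. -/
noncomputable def MSTSp (dist : X → X → ℝ) (𝒞 : Set (Set X)) : ℝ :=
  sInf {c : ℝ | ∃ T : SimpleGraph {A : Set X // A ∈ 𝒞}, T.IsTree ∧ treeCost dist 𝒞 T = c}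

/-- `T` is a minimum spanning tree of the complete graph `G_𝒞` on the groups of `𝒞`. -/
def IsMST (dist : X → X → ℝ) (𝒞 : Set (Set X))
    (T : SimpleGraph {A : Set X // A ∈ 𝒞}) : Prop :=
  T.IsTree ∧ ∀ T' : SimpleGraph {A : Set X // A ∈ 𝒞}, T'.IsTree →
    treeCost dist 𝒞 T ≤ treeCost dist 𝒞 T'

/-- `SingleLinkage dist t 𝒟` holds iff `𝒟` is the collection of groups present
after `t` merging steps of the single-linkage algorithm. -/
inductive SingleLinkage (dist : X → X → ℝ) : ℕ → Set (Set X) → Prop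
  | zero : SingleLinkage dist 0 {A : Set X | ∃ x : X, A = {x}}
  | succ (t : ℕ) (𝒟 : Set (Set X)) (A B : Set X) :
      SingleLinkage dist t 𝒟 → A ∈ 𝒟 → B ∈ 𝒟 → A ≠ B →
      (∀ A' ∈ 𝒟, ∀ B' ∈ 𝒟, A' ≠ B' → spacing dist A B ≤ spacing dist A' B') →
      SingleLinkage dist (t + 1) (insert (A ∪ B) (𝒟 \ {A, B}))

/-- The list of edge weights of a graph on the groups of a clustering, sorted
in nondecreasing order. -/
noncomputable def edgeWeightsSorted [Fintype X] (dist : X → X → ℝ) (𝒞 : Set (Set X))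
    (T : SimpleGraph {A : Set X // A ∈ 𝒞}) : List ℝ :=
  Multiset.sort
    ((T.edgeSet.toFinite.toFinset.val).map (fun e => edgeWeight dist (Sym2.map Subtype.val e))) (· ≤ ·)

/-!
Single linkage merges pairs at non-decreasing spacings. Hence, once some pair of current groups has
spacing at most `d`, every current group is joined by chains of steps of length at most `d`. A
clustering whose minimum spacing exceeds `d` never separates the two ends of such a step, so it
cannot cut a chain, and each group, as well as the union of two groups at spacing at most `d`,
lies inside one of its groups.
-/

-- The chains may leave `S`.
def ChainConnected (dist : X → X → ℝ) (d : ℝ) (S : Set X) : Prop :=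
  ∀ x ∈ S, ∀ y ∈ S, Relation.ReflTransGen (fun a b => dist a b ≤ d) x y

section Spacing

variable {dist : X → X → ℝ}

lemma spacing_comm (hsymm : ∀ x y, dist x y = dist y x) (A B : Set X) :
    spacing dist A B = spacing dist B A := by
  unfold spacing
  congr 1
  ext d
  constructor <;> rintro ⟨x, hx, y, hy, rfl⟩ <;> exact ⟨y, hy, x, hx, hsymm _ _⟩

variable [Finite X]

variable (dist) in
lemma finite_distSet (A B : Set X) :
    {d : ℝ | ∃ x ∈ A, ∃ y ∈ B, d = dist x y}.Finite :=
  (Set.finite_range fun p : X × X => dist p.1 p.2).subset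
    fun _ ⟨x, _, y, _, hd⟩ => ⟨(x, y), hd.symm⟩

lemma spacing_le {A B : Set X} {x y : X} (hx : x ∈ A) (hy : y ∈ B) :
    spacing dist A B ≤ dist x y :=
  csInf_le (finite_distSet dist A B).bddBelow ⟨x, hx, y, hy, rfl⟩

lemma exists_eq_spacing {A B : Set X} (hA : A.Nonempty) (hB : B.Nonempty) :
    ∃ x ∈ A, ∃ y ∈ B, spacing dist A B = dist x y := by
  obtain ⟨x, hx⟩ := hA
  obtain ⟨y, hy⟩ := hB
  have hne : {d : ℝ | ∃ x ∈ A, ∃ y ∈ B, d = dist x y}.Nonempty := ⟨_, x, hx, y, hy, rfl⟩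
  exact hne.csInf_mem (finite_distSet dist A B)

lemma le_spacing_union {A B Q : Set X} {m : ℝ} (hAB : (A ∪ B).Nonempty) (hQ : Q.Nonempty)
    (hA : m ≤ spacing dist A Q) (hB : m ≤ spacing dist B Q) : m ≤ spacing dist (A ∪ B) Q := by
  obtain ⟨x, hx, y, hy, hxy⟩ := exists_eq_spacing (dist := dist) hAB hQ
  rw [hxy]
  rcases hx with hx | hx
  · exact hA.trans (spacing_le hx hy)
  · exact hB.trans (spacing_le hx hy)

lemma minSp_le_spacing {𝒞 : Set (Set X)} {A B : Set X} (hA : A ∈ 𝒞) (hB : B ∈ 𝒞) (hAB : A ≠ B) :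
    MinSp dist 𝒞 ≤ spacing dist A B := by
  refine csInf_le (Set.Finite.bddBelow ?_) ⟨A, hA, B, hB, hAB, rfl⟩
  exact (Set.finite_range fun p : Set X × Set X => spacing dist p.1 p.2).subset
    fun _ ⟨A, _, B, _, _, hd⟩ => ⟨(A, B), hd.symm⟩

lemma spacing_le_spacing_of_mem_merge (hsymm : ∀ x y, dist x y = dist y x) {𝒟 : Set (Set X)}
    (hne : ∀ D ∈ 𝒟, D.Nonempty) {A B : Set X} (hA : A ∈ 𝒟) (hB : B ∈ 𝒟)
    (hmin : ∀ A' ∈ 𝒟, ∀ B' ∈ 𝒟, A' ≠ B' → spacing dist A B ≤ spacing dist A' B')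
    {P Q : Set X} (hP : P ∈ insert (A ∪ B) (𝒟 \ {A, B})) (hQ : Q ∈ insert (A ∪ B) (𝒟 \ {A, B}))
    (hPQ : P ≠ Q) : spacing dist A B ≤ spacing dist P Q := by
  have merged_left : ∀ Q ∈ 𝒟 \ {A, B}, spacing dist A B ≤ spacing dist (A ∪ B) Q := by
    rintro Q ⟨hQ, hQAB⟩
    simp only [Set.mem_insert_iff, Set.mem_singleton_iff, not_or] at hQAB
    exact le_spacing_union ((hne A hA).mono Set.subset_union_left) (hne Q hQ)
      (hmin A hA Q hQ (Ne.symm hQAB.1)) (hmin B hB Q hQ (Ne.symm hQAB.2))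
  rcases hP with rfl | hP <;> rcases hQ with rfl | hQ
  · exact absurd rfl hPQ
  · exact merged_left Q hQ
  · rw [spacing_comm hsymm P]
    exact merged_left P hP
  · exact hmin P hP.1 Q hQ.1 hPQ

end Spacing

section ChainConnected

variable {dist : X → X → ℝ} {d : ℝ}

lemma ChainConnected.union [Finite X] (hsymm : ∀ x y, dist x y = dist y x) {A B : Set X}
    (hA : ChainConnected dist d A) (hB : ChainConnected dist d B) (hAne : A.Nonempty)
    (hBne : B.Nonempty) (hAB : spacing dist A B ≤ d) : ChainConnected dist d (A ∪ B) := by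
  obtain ⟨a, ha, b, hb, hab⟩ := exists_eq_spacing (dist := dist) hAne hBne
  have hstep_ab : Relation.ReflTransGen (fun a b => dist a b ≤ d) a b := .single (hab ▸ hAB)
  have hstep_ba : Relation.ReflTransGen (fun a b => dist a b ≤ d) b a :=
    .single (hsymm b a ▸ hab ▸ hAB)
  rintro x (hx | hx) y (hy | hy)
  · exact hA x hx y hy
  · exact ((hA x hx a ha).trans hstep_ab).trans (hB b hb y hy)
  · exact ((hB x hx b hb).trans hstep_ba).trans (hA a ha y hy)
  · exact hB x hx y hy

lemma IsClustering.exists_mem {𝒞 : Set (Set X)} (h𝒞 : IsClustering 𝒞) (x : X) :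
    ∃ C ∈ 𝒞, x ∈ C :=
  Set.mem_sUnion.1 (h𝒞.2.1 ▸ Set.mem_univ x)

lemma IsClustering.mem_of_reflTransGen [Finite X] {𝒞 : Set (Set X)} (h𝒞 : IsClustering 𝒞)
    (hd : d < MinSp dist 𝒞) {C : Set X} (hC : C ∈ 𝒞) {x y : X} (hx : x ∈ C)
    (hxy : Relation.ReflTransGen (fun a b => dist a b ≤ d) x y) : y ∈ C := by
  induction hxy with
  | refl => exact hx
  | @tail b c _ hbc hb =>
    obtain ⟨C', hC', hc⟩ := h𝒞.exists_mem c
    obtain rfl : C = C' := by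
      by_contra hCC'
      exact (hd.trans_le ((minSp_le_spacing hC hC' hCC').trans
        ((spacing_le hb hc).trans hbc))).false
    exact hc

lemma IsClustering.exists_subset_of_chainConnected [Finite X] {𝒞 : Set (Set X)}
    (h𝒞 : IsClustering 𝒞) (hd : d < MinSp dist 𝒞) {S : Set X} (hS : S.Nonempty)
    (hSd : ChainConnected dist d S) : ∃ C ∈ 𝒞, S ⊆ C := by
  obtain ⟨x, hx⟩ := hS
  obtain ⟨C, hC, hxC⟩ := h𝒞.exists_mem x
  exact ⟨C, hC, fun y hy => h𝒞.mem_of_reflTransGen hd hC hxC (hSd x hx y hy)⟩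

end ChainConnected

namespace SingleLinkage

variable {dist : X → X → ℝ} {t : ℕ} {𝒟 : Set (Set X)}

lemma nonempty_of_mem (h : SingleLinkage dist t 𝒟) {D : Set X} (hD : D ∈ 𝒟) : D.Nonempty := by
  induction h generalizing D with
  | zero => obtain ⟨x, rfl⟩ := hD; exact Set.singleton_nonempty x
  | succ _ _ A _ _ hA _ _ _ ih =>
    rcases hD with rfl | hD
    · exact (ih hA).mono Set.subset_union_left
    · exact ih hD.1

lemma chainConnected [Finite X] (hsymm : ∀ x y, dist x y = dist y x)
    (h : SingleLinkage dist t 𝒟) {d : ℝ}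
    (hd : ∃ A ∈ 𝒟, ∃ B ∈ 𝒟, A ≠ B ∧ spacing dist A B ≤ d) :
    ∀ D ∈ 𝒟, ChainConnected dist d D := by
  induction h with
  | zero =>
    rintro _ ⟨x, rfl⟩ a rfl b rfl
    exact .refl
  | succ _ _ A B hsl hA hB hAB hmin ih =>
    obtain ⟨P, hP, Q, hQ, hPQ, hPQd⟩ := hd
    have hABd : spacing dist A B ≤ d :=
      (spacing_le_spacing_of_mem_merge hsymm (fun _ => hsl.nonempty_of_mem) hA hB hmin hP hQ
        hPQ).trans hPQd
    have ih := ih ⟨A, hA, B, hB, hAB, hABd⟩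
    rintro D (rfl | ⟨hD, -⟩)
    · exact (ih A hA).union hsymm (ih B hB) (hsl.nonempty_of_mem hA) (hsl.nonempty_of_mem hB) hABd
    · exact ih D hD

end SingleLinkage

theorem singleLinkage_groups_refine_better_clustering_general {X : Type*} [Fintype X] (dist : X → X → ℝ)
    (hsymm : ∀ x y : X, dist x y = dist y x)
    (t : ℕ)
    (𝒟 : Set (Set X)) (h𝒟 : SingleLinkage dist t 𝒟)
    (Da Db : Set X) (hDa : Da ∈ 𝒟) (hDb : Db ∈ 𝒟) (hab : Da ≠ Db)
    (𝒞 : Set (Set X)) (h𝒞 : IsClustering 𝒞)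
    (hgt : spacing dist Da Db < MinSp dist 𝒞) :
    (∀ D ∈ 𝒟, ∃ C ∈ 𝒞, D ⊆ C) ∧ (∃ C ∈ 𝒞, Da ∪ Db ⊆ C) := by
  have hlinked := h𝒟.chainConnected hsymm ⟨Da, hDa, Db, hDb, hab, le_rfl⟩
  have hDane := h𝒟.nonempty_of_mem hDa
  refine ⟨fun D hD => h𝒞.exists_subset_of_chainConnected hgt (h𝒟.nonempty_of_mem hD)
    (hlinked D hD), ?_⟩
  exact h𝒞.exists_subset_of_chainConnected hgt (hDane.mono Set.subset_union_left)
    ((hlinked Da hDa).union hsymm (hlinked Db hDb) hDane (h𝒟.nonempty_of_mem hDb) le_rfl)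

theorem singleLinkage_groups_refine_better_clustering {X : Type*} [Fintype X] (dist : X → X → ℝ)
    (hsymm : ∀ x y : X, dist x y = dist y x)
    (hpos : ∀ x y : X, x ≠ y → 0 < dist x y)
    (hdistinct : ∀ x y x' y' : X, x ≠ y → x' ≠ y' → dist x y = dist x' y' →
      (x = x' ∧ y = y') ∨ (x = y' ∧ y = x'))
    (t : ℕ) (ht : t ≤ Fintype.card X - 2)
    (𝒟 : Set (Set X)) (h𝒟 : SingleLinkage dist t 𝒟)
    (Da Db : Set X) (hDa : Da ∈ 𝒟) (hDb : Db ∈ 𝒟) (hab : Da ≠ Db)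
    (hminpair : ∀ A ∈ 𝒟, ∀ B ∈ 𝒟, A ≠ B → spacing dist Da Db ≤ spacing dist A B)
    (𝒞 : Set (Set X)) (h𝒞 : IsClustering 𝒞) (h𝒞2 : 2 ≤ 𝒞.ncard)
    (hgt : spacing dist Da Db < MinSp dist 𝒞) :
    (∀ D ∈ 𝒟, ∃ C ∈ 𝒞, D ⊆ C) ∧ (∃ C ∈ 𝒞, Da ∪ Db ⊆ C) :=
  singleLinkage_groups_refine_better_clustering_general dist hsymm t 𝒟 h𝒟 Da Db hDa hDb hab 𝒞 h𝒞 hgt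

end ClusterSpacing
end

section
/- Let A be a clustering of X into ℓ ≥ 2 groups and let B be a clustering of X into k ≥ ℓ groups that refines A, i.e., every group of B is contained in some group of A. Then MST-Sp(B) ≥ MST-Sp(A). -/
open scoped Classical

theorem finsum_mem_le_finsum_mem_of_injOn {α β M : Type*} [AddCommMonoid M] [PartialOrder M]
    [IsOrderedAddMonoid M] {s : Set α} {t : Set β} {f : α → M} {g : β → M} {ψ : α → β}
    (ht : t.Finite) (hmaps : Set.MapsTo ψ s t) (hinj : Set.InjOn ψ s)
    (hle : ∀ a ∈ s, f a ≤ g (ψ a)) (hg : ∀ b ∈ t, 0 ≤ g b) :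
    ∑ᶠ a ∈ s, f a ≤ ∑ᶠ b ∈ t, g b := by
  have hs : s.Finite := ht.of_injOn hmaps hinj
  rw [finsum_mem_eq_finite_toFinset_sum _ hs, finsum_mem_eq_finite_toFinset_sum _ ht]
  calc ∑ a ∈ hs.toFinset, f a
      ≤ ∑ a ∈ hs.toFinset, g (ψ a) := Finset.sum_le_sum fun a ha => hle a (hs.mem_toFinset.1 ha)
    _ = ∑ b ∈ hs.toFinset.image ψ, g b := (Finset.sum_image (by simpa using hinj)).symm
    _ ≤ ∑ b ∈ ht.toFinset, g b := by
      refine Finset.sum_le_sum_of_subset_of_nonneg ?_ fun b hb _ => hg b (ht.mem_toFinset.1 hb)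
      intro b hb
      obtain ⟨a, ha, rfl⟩ := Finset.mem_image.1 hb
      exact ht.mem_toFinset.2 (hmaps (hs.mem_toFinset.1 ha))

namespace SimpleGraph

variable {V W : Type*}

theorem Reachable.map_of_forall_adj {G : SimpleGraph V} {H : SimpleGraph W} (f : V → W)
    (h : ∀ a b, G.Adj a b → H.Reachable (f a) (f b)) {a b : V} (hab : G.Reachable a b) :
    H.Reachable (f a) (f b) := by
  rw [reachable_iff_reflTransGen] at hab ⊢
  exact Relation.ReflTransGen.lift' f
    (fun x y hxy => (reachable_iff_reflTransGen _ _).1 (h x y hxy)) a b hab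

def contract (G : SimpleGraph V) (f : V → W) : SimpleGraph W :=
  fromRel fun a b => ∃ x y, G.Adj x y ∧ f x = a ∧ f y = b

theorem Connected.contract {G : SimpleGraph V} (hG : G.Connected) {f : V → W}
    (hf : Function.Surjective f) : (G.contract f).Connected := by
  have : Nonempty W := hG.nonempty.map f
  refine Connected.mk fun a b => ?_
  obtain ⟨x, rfl⟩ := hf a
  obtain ⟨y, rfl⟩ := hf b
  refine (hG.preconnected x y).map_of_forall_adj f fun u v huv => ?_
  by_cases h : f u = f v
  · exact h ▸ Reachable.refl _
  · exact Adj.reachable ((fromRel_adj _ _ _).2 ⟨h, Or.inl ⟨u, v, huv, rfl, rfl⟩⟩)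

theorem Connected.exists_isTree_edge_lift [Finite W] {G : SimpleGraph V}
    (hG : G.Connected) {f : V → W} (hf : Function.Surjective f) :
    ∃ T : SimpleGraph W, T.IsTree ∧ ∃ ψ : Sym2 W → Sym2 V,
      Set.MapsTo ψ T.edgeSet G.edgeSet ∧ Set.LeftInvOn (Sym2.map f) ψ T.edgeSet := by
  obtain ⟨T, hTle, hT⟩ := (hG.contract hf).exists_isTree_le
  have lift : ∀ e ∈ T.edgeSet, ∃ e' ∈ G.edgeSet, e'.map f = e := by
    intro e he
    induction e using Sym2.ind with
    | _ a b =>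
      obtain ⟨-, ⟨x, y, hxy, rfl, rfl⟩ | ⟨x, y, hxy, rfl, rfl⟩⟩ :=
        (fromRel_adj _ _ _).1 (hTle ((mem_edgeSet T).1 he))
      · exact ⟨s(x, y), hxy, rfl⟩
      · exact ⟨s(y, x), hxy.symm, rfl⟩
  have : Nonempty V := hG.nonempty
  inhabit V
  choose! ψ hψG hψ using lift
  exact ⟨T, hT, ψ, hψG, hψ⟩

end SimpleGraph

namespace ClusterSpacing

variable {X : Type*}

theorem edgeWeight_nonneg {dist : X → X → ℝ} (hpos : ∀ x y : X, x ≠ y → 0 < dist x y)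
    {A B : Set X} (hAB : Disjoint A B) : 0 ≤ edgeWeight dist s(A, B) := by
  refine Real.sInf_nonneg ?_
  rintro d (⟨x, hx, y, hy, rfl⟩ | ⟨x, hx, y, hy, rfl⟩)
  · exact (hpos x y (hAB.ne_of_mem hx hy)).le
  · exact (hpos x y (hAB.symm.ne_of_mem hx hy)).le

theorem edgeWeight_le_edgeWeight_of_subset [Finite X] (dist : X → X → ℝ) {A B A' B' : Set X}
    (hA : A' ⊆ A) (hB : B' ⊆ B) (hA' : A'.Nonempty) (hB' : B'.Nonempty) :
    edgeWeight dist s(A, B) ≤ edgeWeight dist s(A', B') := by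
  simp only [edgeWeight, Sym2.lift_mk]
  refine csInf_le_csInf ?_ ?_ ?_
  · refine ((Set.finite_range fun p : X × X => dist p.1 p.2).subset ?_).bddBelow
    rintro d (⟨x, -, y, -, rfl⟩ | ⟨x, -, y, -, rfl⟩) <;> exact ⟨(x, y), rfl⟩
  · obtain ⟨x, hx⟩ := hA'
    obtain ⟨y, hy⟩ := hB'
    exact ⟨dist x y, Or.inl ⟨x, hx, y, hy, rfl⟩⟩
  · rintro d (⟨x, hx, y, hy, rfl⟩ | ⟨x, hx, y, hy, rfl⟩)
    · exact Or.inl ⟨x, hA hx, y, hB hy, rfl⟩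
    · exact Or.inr ⟨x, hB hx, y, hA hy, rfl⟩

theorem MSTSp_eq_zero_of_isEmpty (dist : X → X → ℝ) (𝒞 : Set (Set X))
    [IsEmpty {A : Set X // A ∈ 𝒞}] : MSTSp dist 𝒞 = 0 := by
  have : {c : ℝ | ∃ T : SimpleGraph {A : Set X // A ∈ 𝒞}, T.IsTree ∧ treeCost dist 𝒞 T = c} = ∅ :=
    Set.eq_empty_of_forall_notMem fun _ ⟨T, hT, _⟩ => IsEmpty.false hT.nonempty.some
  rw [MSTSp, this, Real.sInf_empty]

theorem MSTSp_le_treeCost [Finite X] (dist : X → X → ℝ) {𝒞 : Set (Set X)}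
    {T : SimpleGraph {A : Set X // A ∈ 𝒞}} (hT : T.IsTree) :
    MSTSp dist 𝒞 ≤ treeCost dist 𝒞 T := by
  refine csInf_le (((Set.finite_range (treeCost dist 𝒞)).subset ?_).bddBelow) ⟨T, hT, rfl⟩
  rintro _ ⟨T, -, rfl⟩
  exact ⟨T, rfl⟩

theorem le_MSTSp [Finite X] (dist : X → X → ℝ) {𝒞 : Set (Set X)}
    [Nonempty {A : Set X // A ∈ 𝒞}] {c : ℝ}
    (h : ∀ T : SimpleGraph {A : Set X // A ∈ 𝒞}, T.IsTree → c ≤ treeCost dist 𝒞 T) :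
    c ≤ MSTSp dist 𝒞 := by
  obtain ⟨T, -, hT⟩ := (SimpleGraph.connected_top (V := {A : Set X // A ∈ 𝒞})).exists_isTree_le
  exact le_csInf ⟨_, T, hT, rfl⟩ fun _ ⟨T, hT, hc⟩ => hc ▸ h T hT

theorem IsClustering.exists_surjective_of_refines {𝒜 ℬ : Set (Set X)} (h𝒜 : IsClustering 𝒜)
    (hℬ : IsClustering ℬ) (href : ∀ B ∈ ℬ, ∃ A ∈ 𝒜, B ⊆ A) :
    ∃ φ : {B : Set X // B ∈ ℬ} → {A : Set X // A ∈ 𝒜},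
      Function.Surjective φ ∧ ∀ b, b.1 ⊆ (φ b).1 := by
  choose φ hφ𝒜 hφ using fun b : {B : Set X // B ∈ ℬ} => href b.1 b.2
  refine ⟨fun b => ⟨φ b, hφ𝒜 b⟩, fun a => ?_, hφ⟩
  obtain ⟨x, hxa⟩ := h𝒜.1 a.1 a.2
  obtain ⟨B, hB, hxB⟩ := Set.mem_sUnion.1 (hℬ.2.1.symm ▸ Set.mem_univ x)
  refine ⟨⟨B, hB⟩, Subtype.ext (by_contra fun hne => ?_)⟩
  exact Set.disjoint_left.1 (h𝒜.2.2 _ (hφ𝒜 _) _ a.2 hne) (hφ ⟨B, hB⟩ hxB) hxa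

theorem exists_isTree_treeCost_le_of_surjective [Finite X] {dist : X → X → ℝ}
    (hpos : ∀ x y : X, x ≠ y → 0 < dist x y) {𝒜 ℬ : Set (Set X)} (hℬ : IsClustering ℬ)
    {φ : {B : Set X // B ∈ ℬ} → {A : Set X // A ∈ 𝒜}} (hφ : Function.Surjective φ)
    (hsub : ∀ b, b.1 ⊆ (φ b).1) {TB : SimpleGraph {B : Set X // B ∈ ℬ}} (hTB : TB.IsTree) :
    ∃ TA : SimpleGraph {A : Set X // A ∈ 𝒜}, TA.IsTree ∧
      treeCost dist 𝒜 TA ≤ treeCost dist ℬ TB := by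
  obtain ⟨TA, hTA, ψ, hψTB, hψ⟩ := hTB.connected.exists_isTree_edge_lift hφ
  refine ⟨TA, hTA, finsum_mem_le_finsum_mem_of_injOn (Set.toFinite _) hψTB hψ.injOn ?_ ?_⟩
  · intro e he
    conv_lhs => rw [← hψ he]
    induction ψ e using Sym2.ind with
    | _ b b' =>
      simp only [Sym2.map_mk]
      exact edgeWeight_le_edgeWeight_of_subset dist (hsub b) (hsub b') (hℬ.1 _ b.2) (hℬ.1 _ b'.2)
  · intro e he
    induction e using Sym2.ind with
    | _ b b' =>
      exact edgeWeight_nonneg hpos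
        (hℬ.2.2 _ b.2 _ b'.2 fun h => ((SimpleGraph.mem_edgeSet TB).1 he).ne (Subtype.ext h))

theorem MSTSp_le_of_refines_general {X : Type*} [Fintype X] (dist : X → X → ℝ)
    (hpos : ∀ x y : X, x ≠ y → 0 < dist x y)
    (𝒜 : Set (Set X)) (h𝒜 : IsClustering 𝒜)
    (ℬ : Set (Set X)) (hℬ : IsClustering ℬ)
    (href : ∀ B ∈ ℬ, ∃ A ∈ 𝒜, B ⊆ A) :
    MSTSp dist 𝒜 ≤ MSTSp dist ℬ := by
  obtain ⟨φ, hφ, hsub⟩ := h𝒜.exists_surjective_of_refines hℬ href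
  rcases isEmpty_or_nonempty {B : Set X // B ∈ ℬ} with hℬ₀ | hℬ₀
  · have : IsEmpty {A : Set X // A ∈ 𝒜} := hφ.isEmpty
    rw [MSTSp_eq_zero_of_isEmpty, MSTSp_eq_zero_of_isEmpty]
  · refine le_MSTSp dist fun TB hTB => ?_
    obtain ⟨TA, hTA, hcost⟩ := exists_isTree_treeCost_le_of_surjective hpos hℬ hφ hsub hTB
    exact (MSTSp_le_treeCost dist hTA).trans hcost

theorem MSTSp_le_of_refines {X : Type*} [Fintype X] (dist : X → X → ℝ)
    (hsymm : ∀ x y : X, dist x y = dist y x)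
    (hpos : ∀ x y : X, x ≠ y → 0 < dist x y)
    (hdistinct : ∀ x y x' y' : X, x ≠ y → x' ≠ y' → dist x y = dist x' y' →
      (x = x' ∧ y = y') ∨ (x = y' ∧ y = x'))
    (ℓ k : ℕ) (hℓ : 2 ≤ ℓ) (hℓk : ℓ ≤ k)
    (𝒜 : Set (Set X)) (h𝒜 : IsClustering 𝒜) (h𝒜c : 𝒜.ncard = ℓ)
    (ℬ : Set (Set X)) (hℬ : IsClustering ℬ) (hℬc : ℬ.ncard = k)
    (href : ∀ B ∈ ℬ, ∃ A ∈ 𝒜, B ⊆ A) :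
    MSTSp dist 𝒜 ≤ MSTSp dist ℬ :=
  MSTSp_le_of_refines_general dist hpos 𝒜 h𝒜 ℬ hℬ href

end ClusterSpacing
end
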